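/- The may-happen-in-parallel relation on phasers is not transitive: there exist well-formed, well-ordered phasers P, Q, R such that P ∥ Q and Q ∥ R but ¬(P ∥ R) (indeed P ≺ R). -/
import Mathlib


/-- Registration modes: signal-wait, signal-only, wait-only. -/
inductive Mode
  | SW | SO | WO
deriving DecidableEq

/-- A mode can signal iff it is SW or SO. -/
def Mode.CanSignal (r : Mode) : Prop := r = Mode.SW ∨ r = Mode.SO

/-- A mode can wait iff it is SW or WO. -/
def Mode.CanWait (r : Mode) : Prop := r = Mode.SW ∨ r = Mode.WO

/-- A view: a signal phase, a wait phase, and a registration mode. -/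
structure View where
  sp : ℕ
  wp : ℕ
  mode : Mode

def View.CanSignal (v : View) : Prop := v.mode.CanSignal

def View.CanWait (v : View) : Prop := v.mode.CanWait

/-- Well-formed views. -/
def View.WellFormed (v : View) : Prop :=
  (v.CanWait ∧ v.wp = v.sp) ∨ (v.CanWait ∧ v.wp + 1 = v.sp) ∨
  (v.mode = Mode.SO ∧ v.wp ≤ v.sp)

/-- Happens-before on views: v1 ≺ v2. -/
def View.HB (v1 v2 : View) : Prop :=
  v1.sp < v2.wp ∧ v1.CanSignal ∧ v2.CanWait

/-- Cannot-happen-before on views: v1 ⊵ v2. -/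
def View.CHB (v1 v2 : View) : Prop :=
  v1.mode = Mode.WO ∨ v1.sp ≥ v2.wp ∨ v2.mode = Mode.SO

/-- A phaser: a finite partial map from task identifiers (ℕ) to views. -/
abbrev Phaser := Finmap (fun _ : ℕ => View)

/-- Happens-before on phasers: P ≺ Q. -/
def Phaser.HB (P Q : Phaser) : Prop :=
  ∃ t t' v1 v2, P.lookup t = some v1 ∧ Q.lookup t' = some v2 ∧ View.HB v1 v2

/-- Cannot-happen-before on phasers: P ⊵ Q. -/
def Phaser.CHB (P Q : Phaser) : Prop :=
  ∀ t t' v1 v2, P.lookup t = some v1 → Q.lookup t' = some v2 → View.CHB v1 v2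

/-- May-happen-in-parallel on phasers: P ∥ Q. -/
def Phaser.Par (P Q : Phaser) : Prop := Phaser.CHB P Q ∧ Phaser.CHB Q P

/-- A well-formed phaser: every view in its range is well-formed. -/
def Phaser.WellFormed (P : Phaser) : Prop :=
  ∀ t v, P.lookup t = some v → v.WellFormed

/-- A well-ordered phaser: P ⊵ P. -/
def Phaser.WellOrdered (P : Phaser) : Prop := Phaser.CHB P P

/-- Phaser operations. -/
inductive Op
  | signal
  | wait
  | register (t' : ℕ) (r : Mode)
  | drop

/-- The reduction relation on phasers: P —(t,o)→ Q. -/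
inductive Reduces : Phaser → ℕ → Op → Phaser → Prop
  | signal {P : Phaser} {t : ℕ} {v : View} :
      P.lookup t = some v →
      v.CanSignal →
      (v.mode = Mode.SW → v.wp = v.sp) →
      Reduces P t Op.signal (P.insert t { v with sp := v.sp + 1 })
  | wait {P : Phaser} {t : ℕ} {v : View} :
      P.lookup t = some v →
      v.CanWait →
      (v.mode = Mode.SW → v.wp + 1 = v.sp) →
      (v.mode = Mode.SO ∨
        ∀ t' v', P.lookup t' = some v' → v'.CanSignal → v'.sp ≥ v.wp + 1) →
      Reduces P t Op.wait (P.insert t { v with wp := v.wp + 1 })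
  | register {P : Phaser} {t t' : ℕ} {r : Mode} {v : View} :
      t' ∉ P →
      P.lookup t = some v →
      (r.CanWait → v.CanWait) →
      (r.CanSignal → v.CanSignal) →
      Reduces P t (Op.register t' r) (P.insert t' { v with mode := r })
  | drop {P : Phaser} {t : ℕ} :
      t ∈ P →
      Reduces P t Op.drop (P.erase t)

/-- Single-step reduction: P ⟶ Q iff some task performs some operation. -/
def SReduces (P Q : Phaser) : Prop := ∃ t o, Reduces P t o Q


lemma lookup_single {b v : View} {t : ℕ} (h : (Finmap.singleton 0 b : Phaser).lookup t = some v) : v = b := by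
  have ht : t ∈ (Finmap.singleton 0 b : Phaser) := Finmap.lookup_isSome.mp (by rw [h]; rfl)
  rw [Finmap.mem_singleton] at ht
  subst ht
  rw [Finmap.lookup_singleton_eq] at h
  exact (Option.some_inj.mp h).symm

/-- may-happen-in-parallel on phasers is not transitive. -/
theorem par_not_transitive :
    ∃ P Q R : Phaser,
      P.WellFormed ∧ P.WellOrdered ∧
      Q.WellFormed ∧ Q.WellOrdered ∧
      R.WellFormed ∧ R.WellOrdered ∧
      Phaser.Par P Q ∧ Phaser.Par Q R ∧ ¬ Phaser.Par P R ∧ Phaser.HB P R := by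
  refine ⟨Finmap.singleton 0 ⟨0,0,Mode.SW⟩, Finmap.singleton 0 ⟨0,0,Mode.WO⟩,
    Finmap.singleton 0 ⟨1,1,Mode.SW⟩, ?_, ?_, ?_, ?_, ?_, ?_, ⟨?_, ?_⟩, ⟨?_, ?_⟩, ?_, ?_⟩
  · intro t v h; rw [lookup_single h]; left; exact ⟨Or.inl rfl, rfl⟩
  · intro t t' v1 v2 h1 h2; rw [lookup_single h1, lookup_single h2]; right; left; exact le_refl 0
  · intro t v h; rw [lookup_single h]; left; exact ⟨Or.inr rfl, rfl⟩
  · intro t t' v1 v2 h1 h2; rw [lookup_single h1]; left; rfl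
  · intro t v h; rw [lookup_single h]; left; exact ⟨Or.inl rfl, rfl⟩
  · intro t t' v1 v2 h1 h2; rw [lookup_single h1, lookup_single h2]; right; left; exact le_refl 1
  · intro t t' v1 v2 h1 h2; rw [lookup_single h1, lookup_single h2]; right; left; exact le_refl 0
  · intro t t' v1 v2 h1 h2; rw [lookup_single h1]; left; rfl
  · intro t t' v1 v2 h1 h2; rw [lookup_single h1]; left; rfl
  · intro t t' v1 v2 h1 h2; rw [lookup_single h1, lookup_single h2]; right; left; exact Nat.zero_le 1
  · rintro ⟨h, -⟩
    have := h 0 0 ⟨0,0,Mode.SW⟩ ⟨1,1,Mode.SW⟩ Finmap.lookup_singleton_eq Finmap.lookup_singleton_eq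
    rcases this with h | h | h <;> simp_all [View.CHB]
  · exact ⟨0, 0, ⟨0,0,Mode.SW⟩, ⟨1,1,Mode.SW⟩, Finmap.lookup_singleton_eq,
      Finmap.lookup_singleton_eq, Nat.zero_lt_one, Or.inl rfl, Or.inl rfl⟩
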